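/- arXiv:2307.00440 — 3 statements merged into one kernel-verified Lean document; each statement's English description precedes it below -/
import Mathlib

section
/- Every unit of Z[√2] is of the form ±(1+√2)^m for some m ∈ Z. -/
open Zsqrtd Pell

private def sol2ToUnit (a : Pell.Solution₁ 2) : (Zsqrtd 2)ˣ :=
  ⟨(a : Zsqrtd 2), (a⁻¹ : Pell.Solution₁ 2), by
    exact congrArg Subtype.val (mul_inv_cancel a), by
    exact congrArg Subtype.val (inv_mul_cancel a)⟩

private def sol2ToUnitHom : Pell.Solution₁ 2 →* (Zsqrtd 2)ˣ where
  toFun := sol2ToUnit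
  map_one' := by apply Units.ext; rfl
  map_mul' a b := by apply Units.ext; rfl

private lemma sol2ToUnit_coe (a : Pell.Solution₁ 2) :
    ((sol2ToUnit a : (Zsqrtd 2)ˣ) : Zsqrtd 2) = (a : Zsqrtd 2) := rfl

private lemma h32 : (3 : ℤ) ^ 2 - 2 * 2 ^ 2 = 1 := by norm_num

private def a₁ : Pell.Solution₁ 2 := Pell.Solution₁.mk 3 2 h32

private lemma a₁_fund : Pell.IsFundamental a₁ := by
  refine ⟨by norm_num [a₁], by norm_num [a₁], ?_⟩
  intro b hb
  have hprop := b.prop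
  show (3 : ℤ) ≤ b.x
  by_contra hlt
  push_neg at hlt
  interval_cases h : b.x; omega

theorem stmt_2 (ε : (Zsqrtd 2)ˣ) (hε : (ε : Zsqrtd 2) = ⟨1, 1⟩) :
    ∀ u : (Zsqrtd 2)ˣ, ∃ m : ℤ,
      (u : Zsqrtd 2) = ((ε ^ m : (Zsqrtd 2)ˣ) : Zsqrtd 2) ∨
      (u : Zsqrtd 2) = -((ε ^ m : (Zsqrtd 2)ˣ) : Zsqrtd 2) := by
  -- ε² corresponds to the fundamental solution a₁ = (3, 2)
  have hε2 : sol2ToUnit a₁ = ε ^ 2 := by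
    apply Units.ext
    rw [sol2ToUnit_coe, Units.val_pow_eq_pow_val, hε]
    show (⟨3, 2⟩ : Zsqrtd 2) = _
    ext <;> simp [pow_two, Zsqrtd.re_mul, Zsqrtd.im_mul]
  -- key: any solution of the Pell equation gives the desired form with even m
  have key : ∀ v : (Zsqrtd 2)ˣ, Zsqrtd.norm (v : Zsqrtd 2) = 1 → ∃ n : ℤ,
      (v : Zsqrtd 2) = ((ε ^ (2 * n) : (Zsqrtd 2)ˣ) : Zsqrtd 2) ∨
      (v : Zsqrtd 2) = -((ε ^ (2 * n) : (Zsqrtd 2)ˣ) : Zsqrtd 2) := by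
    intro v hv
    set s : Pell.Solution₁ 2 := ⟨(v : Zsqrtd 2), Zsqrtd.norm_eq_one_iff_mem_unitary.mp hv⟩
      with hs
    obtain ⟨n, hn⟩ := a₁_fund.eq_zpow_or_neg_zpow s
    refine ⟨n, ?_⟩
    have hcoe : ∀ k : ℤ, ((a₁ ^ k : Pell.Solution₁ 2) : Zsqrtd 2)
        = ((ε ^ (2 * k) : (Zsqrtd 2)ˣ) : Zsqrtd 2) := by
      intro k
      have := map_zpow sol2ToUnitHom a₁ k
      have h1 : sol2ToUnitHom (a₁ ^ k) = (ε ^ 2) ^ k := by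
        rw [this, show sol2ToUnitHom a₁ = ε ^ 2 from hε2]
      have h2 : ((sol2ToUnitHom (a₁ ^ k) : (Zsqrtd 2)ˣ) : Zsqrtd 2)
          = ((a₁ ^ k : Pell.Solution₁ 2) : Zsqrtd 2) := rfl
      rw [← h2, h1, ← zpow_natCast ε 2, ← zpow_mul]
      norm_num
    rcases hn with hn | hn
    · left
      calc (v : Zsqrtd 2) = ((a₁ ^ n : Pell.Solution₁ 2) : Zsqrtd 2) :=
            congrArg Subtype.val hn
        _ = _ := hcoe n
    · right
      have h3 : (v : Zsqrtd 2) = ((-(a₁ ^ n) : Pell.Solution₁ 2) : Zsqrtd 2) :=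
        congrArg Subtype.val hn
      have h4 : ((-(a₁ ^ n) : Pell.Solution₁ 2) : Zsqrtd 2)
          = -((a₁ ^ n : Pell.Solution₁ 2) : Zsqrtd 2) := rfl
      rw [h3, h4, hcoe n]
  intro u
  have hεnorm : Zsqrtd.norm ((ε : Zsqrtd 2)) = -1 := by
    rw [hε]; simp [Zsqrtd.norm_def]
  have hmap : Zsqrtd.norm ((u : Zsqrtd 2)) = 1 ∨ Zsqrtd.norm ((u : Zsqrtd 2)) = -1 := by
    have h := (Units.isUnit u).map Zsqrtd.normMonoidHom
    rw [← Int.isUnit_iff]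
    exact h
  rcases hmap with h1 | h1
  · obtain ⟨n, hn⟩ := key u h1
    exact ⟨2 * n, hn⟩
  · have hvnorm : Zsqrtd.norm ((u * ε : (Zsqrtd 2)ˣ) : Zsqrtd 2) = 1 := by
      rw [Units.val_mul, Zsqrtd.norm_mul, h1, hεnorm]; norm_num
    obtain ⟨n, hn⟩ := key (u * ε) hvnorm
    refine ⟨2 * n - 1, ?_⟩
    have hu : (u : Zsqrtd 2)
        = ((u * ε : (Zsqrtd 2)ˣ) : Zsqrtd 2) * ((ε⁻¹ : (Zsqrtd 2)ˣ) : Zsqrtd 2) := by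
      rw [← Units.val_mul]; congr 1; group
    have hpow : ((ε ^ (2 * n) : (Zsqrtd 2)ˣ) : Zsqrtd 2) * ((ε⁻¹ : (Zsqrtd 2)ˣ) : Zsqrtd 2)
        = ((ε ^ (2 * n - 1) : (Zsqrtd 2)ˣ) : Zsqrtd 2) := by
      rw [← Units.val_mul]; congr 1
      rw [← zpow_neg_one, ← zpow_add]
      ring_nf
    rcases hn with hn | hn
    · left; rw [hu, hn, hpow]
    · right; rw [hu, hn, neg_mul, hpow]
end

section
/- Define s_n, d_n by s_0 = 0, d_0 = 1, s_n = √2 s_{n-1} + d_{n-1}, d_n = √2 d_{n-1} + s_{n-1}. Then for every j ≥ 1, the element d_j + (1+√2)^{j+1} of Z[√2] is not a unit of Z[√2]. -/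
theorem stmt_12 (s d : ℕ → Zsqrtd 2)
    (hs0 : s 0 = 0) (hd0 : d 0 = 1)
    (hs : ∀ n, 1 ≤ n → s n = (⟨0, 1⟩ : Zsqrtd 2) * s (n - 1) + d (n - 1))
    (hd : ∀ n, 1 ≤ n → d n = (⟨0, 1⟩ : Zsqrtd 2) * d (n - 1) + s (n - 1)) :
    ∀ j, 1 ≤ j → ¬ IsUnit (d j + (⟨1, 1⟩ : Zsqrtd 2) ^ (j + 1)) := by
  set u : Zsqrtd 2 := ⟨1, 1⟩ with hu
  have hpowre : ∀ k : ℕ, (u ^ (k+1)).re = (u ^ k).re + 2 * (u ^ k).im := by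
    intro k
    rw [pow_succ]
    simp [Zsqrtd.re_mul, hu]
  have hpowim : ∀ k : ℕ, (u ^ (k+1)).im = (u ^ k).re + (u ^ k).im := by
    intro k
    rw [pow_succ]
    simp [Zsqrtd.im_mul, hu]
  have hpos : ∀ k : ℕ, 1 ≤ k → 1 ≤ (u ^ k).re ∧ 1 ≤ (u ^ k).im := by
    intro k hk
    induction k with
    | zero => omega
    | succ m ih =>
      rcases Nat.eq_or_lt_of_le hk with h | h
      · have : m = 0 := by omega
        subst this
        simp [hu]
      · have hm : 1 ≤ m := by omega
        obtain ⟨h1, h2⟩ := ih hm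
        rw [hpowre m, hpowim m]
        omega
  have key : ∀ n : ℕ,
      (Even n → d n = ⟨(u ^ n).re, 0⟩ ∧ s n = ⟨0, (u ^ n).im⟩) ∧
      (Odd n → d n = ⟨0, (u ^ n).im⟩ ∧ s n = ⟨(u ^ n).re, 0⟩) := by
    intro n
    induction n with
    | zero =>
      refine ⟨fun _ => ⟨?_, ?_⟩, fun h => absurd h (by simp)⟩
      · rw [hd0]; ext <;> simp
      · rw [hs0]; ext <;> simp
    | succ k ih =>
      have hsk := hs (k+1) (by omega)
      have hdk := hd (k+1) (by omega)
      simp only [Nat.add_sub_cancel] at hsk hdk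
      constructor
      · intro hek
        have hok : Odd k := Nat.not_even_iff_odd.mp (Nat.even_add_one.mp hek)
        obtain ⟨hdco, hsco⟩ := ih.2 hok
        constructor
        · rw [hdk, hdco, hsco]
          ext <;> simp [Zsqrtd.re_mul, Zsqrtd.im_mul, hpowre k] <;> ring
        · rw [hsk, hdco, hsco]
          ext <;> simp [Zsqrtd.re_mul, Zsqrtd.im_mul, hpowim k] <;> ring
      · intro hok
        have hek : Even k := by
          rcases Nat.even_or_odd k with h | h
          · exact h
          · exact absurd (Odd.add_one h) (fun he => (Nat.not_odd_iff_even.mpr he) hok)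
        obtain ⟨hdco, hsco⟩ := ih.1 hek
        constructor
        · rw [hdk, hdco, hsco]
          ext <;> simp [Zsqrtd.re_mul, Zsqrtd.im_mul, hpowim k] <;> ring
        · rw [hsk, hdco, hsco]
          ext <;> simp [Zsqrtd.re_mul, Zsqrtd.im_mul, hpowre k] <;> ring
  intro j hj hunit
  obtain ⟨h1, h2⟩ := hpos j hj
  set a : ℤ := (u ^ j).re with ha
  set b : ℤ := (u ^ j).im with hb
  have hnorm := (Zsqrtd.isUnit_iff_norm_isUnit _).mp hunit
  rw [Int.isUnit_iff] at hnorm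
  rcases Nat.even_or_odd j with hpar | hpar
  · obtain ⟨hdc, _⟩ := (key j).1 hpar
    have hx : d j + u ^ (j+1) = ⟨2*a + 2*b, a + b⟩ := by
      rw [hdc]
      ext <;> simp [hpowre j, hpowim j, ← ha, ← hb] <;> ring
    rw [hx] at hnorm
    simp [Zsqrtd.norm_def] at hnorm
    rcases hnorm with h | h <;> nlinarith
  · obtain ⟨hdc, _⟩ := (key j).2 hpar
    have hx : d j + u ^ (j+1) = ⟨a + 2*b, a + 2*b⟩ := by
      rw [hdc]
      ext <;> simp [hpowre j, hpowim j, ← ha, ← hb] <;> ring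
    rw [hx] at hnorm
    simp [Zsqrtd.norm_def] at hnorm
    rcases hnorm with h | h <;> nlinarith
end

section
/- Define s_n, d_n by s_0 = 0, d_0 = 1, s_n = √2 s_{n-1} + d_{n-1}, d_n = √2 d_{n-1} + s_{n-1}, and let ℓ_m = (1+√2)^m. Then for all j ≥ 1: (1+√2)^{j+1} < ℓ_{j+1} + ℓ_j + ℓ_{j-1} + d_j + √2·d_{j-1} < (1+√2)^{j+2}, so this expression is not a unit of Z[√2]. -/
set_option maxHeartbeats 1000000

noncomputable def f2 : Zsqrtd 2 →+* ℝ :=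
  Zsqrtd.lift ⟨Real.sqrt 2, by
    rw [Real.mul_self_sqrt (by norm_num)]; norm_num⟩

lemma f2_apply (z : Zsqrtd 2) : f2 z = (z.re : ℝ) + (z.im : ℝ) * Real.sqrt 2 := rfl

lemma sqrt2_sq : Real.sqrt 2 * Real.sqrt 2 = 2 := Real.mul_self_sqrt (by norm_num)

lemma one_lt_sqrt2 : 1 < Real.sqrt 2 := by
  nlinarith [sqrt2_sq, Real.sqrt_nonneg 2]

/-- no unit of ℤ√2 maps strictly between 1 and 1+√2 -/
lemma keyB (v : Zsqrtd 2) (hv : IsUnit v) (h1 : 1 < f2 v) (h2 : f2 v < 1 + Real.sqrt 2) :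
    False := by
  set s2 := Real.sqrt 2 with hs2def
  have hs2 : s2 * s2 = 2 := sqrt2_sq
  have h1s : 1 < s2 := one_lt_sqrt2
  have hnorm : IsUnit v.norm := (Zsqrtd.isUnit_iff_norm_isUnit v).mp hv
  have hn : v.norm = 1 ∨ v.norm = -1 := Int.isUnit_iff.mp hnorm
  set a := v.re with ha
  set b := v.im with hb
  have hnormval : v.norm = a * a - 2 * (b * b) := by
    simp [Zsqrtd.norm, ha, hb]; ring
  have hfv : f2 v = (a : ℝ) + (b : ℝ) * s2 := rfl
  -- conjugate
  have hconj : ((a : ℝ) + b * s2) * ((a : ℝ) - b * s2) = (v.norm : ℝ) := by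
    rw [hnormval]; push_cast; nlinarith [hs2]
  have hu : (1 : ℝ) < (a : ℝ) + b * s2 := by rw [← hfv]; exact h1
  have habs : -1 < (a : ℝ) - b * s2 ∧ (a : ℝ) - b * s2 < 1 := by
    rcases hn with h | h <;> rw [h] at hconj <;> push_cast at hconj <;>
      constructor <;> nlinarith
  have ha2 : (0 : ℝ) < (a : ℝ) ∧ (a : ℝ) < 2 := by
    have h2' : (a : ℝ) + b * s2 < 1 + s2 := by rw [← hfv]; exact h2
    constructor <;> nlinarith [habs.1, habs.2]
  have ha1 : a = 1 := by
    have h0 : (0 : ℤ) < a := by exact_mod_cast ha2.1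
    have h2' : a < 2 := by exact_mod_cast ha2.2
    omega
  rw [ha1] at hnormval
  have hb1 : b = 0 ∨ b = 1 ∨ b = -1 := by
    rcases hn with h | h <;> rw [h] at hnormval
    · left
      have hb0 : b * b = 0 := by linarith
      exact mul_self_eq_zero.mp hb0
    · have hb0 : b * b = 1 := by linarith
      rcases mul_self_eq_one_iff.mp hb0 with h' | h'
      · right; left; exact h'
      · right; right; exact h'
  have hfv' : f2 v = 1 + (b : ℝ) * s2 := by rw [hfv, ha1]; norm_num
  rcases hb1 with h | h | h <;> rw [h] at hfv' <;> push_cast at hfv' <;>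
    rw [hfv'] at h1 h2 <;> nlinarith

/-- the fundamental unit -/
def uw : (Zsqrtd 2)ˣ where
  val := ⟨1, 1⟩
  inv := ⟨-1, 1⟩
  val_inv := by ext <;> simp [Zsqrtd.re_mul, Zsqrtd.im_mul]
  inv_val := by ext <;> simp [Zsqrtd.re_mul, Zsqrtd.im_mul]

lemma f2_uw : f2 (uw : Zsqrtd 2) = 1 + Real.sqrt 2 := by
  rw [f2_apply]; simp [uw]

lemma f2_uw_inv : f2 ((uw⁻¹ : (Zsqrtd 2)ˣ) : Zsqrtd 2) = (1 + Real.sqrt 2)⁻¹ := by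
  have h : f2 ((uw⁻¹ : (Zsqrtd 2)ˣ) : Zsqrtd 2) * f2 (uw : Zsqrtd 2) = 1 := by
    rw [← map_mul]; norm_cast; rw [inv_mul_cancel]; exact map_one f2
  have hpos : (0 : ℝ) < 1 + Real.sqrt 2 := by nlinarith [one_lt_sqrt2]
  rw [f2_uw] at h
  field_simp at h ⊢
  linarith [h]

theorem stmt_13 (s d : ℕ → ℝ)
    (hs0 : s 0 = 0) (hd0 : d 0 = 1)
    (hs : ∀ n, 1 ≤ n → s n = Real.sqrt 2 * s (n - 1) + d (n - 1))
    (hd : ∀ n, 1 ≤ n → d n = Real.sqrt 2 * d (n - 1) + s (n - 1))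
    (ℓ : ℕ → ℝ) (hℓ : ∀ m, ℓ m = (1 + Real.sqrt 2) ^ m) :
    ∀ j, 1 ≤ j →
      (1 + Real.sqrt 2) ^ (j + 1) <
        ℓ (j + 1) + ℓ j + ℓ (j - 1) + d j + Real.sqrt 2 * d (j - 1) ∧
      ℓ (j + 1) + ℓ j + ℓ (j - 1) + d j + Real.sqrt 2 * d (j - 1) <
        (1 + Real.sqrt 2) ^ (j + 2) ∧
      ∀ z : Zsqrtd 2,
        (z.re : ℝ) + (z.im : ℝ) * Real.sqrt 2 =
          ℓ (j + 1) + ℓ j + ℓ (j - 1) + d j + Real.sqrt 2 * d (j - 1) →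
        ¬ IsUnit z := by
  set s2 := Real.sqrt 2 with hs2def
  have hs2 : s2 * s2 = 2 := sqrt2_sq
  have h1s : 1 < s2 := one_lt_sqrt2
  set α := 1 + s2 with hα
  have hαpos : (0 : ℝ) < α := by nlinarith
  -- induction key
  have key : ∀ n, 0 ≤ s n ∧ 0 < d n ∧ s n + d n = α ^ n := by
    intro n
    induction n with
    | zero => simp [hs0, hd0]
    | succ n ih =>
      obtain ⟨ihs, ihd, ihsum⟩ := ih
      rw [hs (n+1) (by omega), hd (n+1) (by omega)]
      simp only [Nat.add_sub_cancel]
      refine ⟨by nlinarith, by nlinarith, ?_⟩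
      rw [pow_succ, ← ihsum]; ring
  intro j hj
  obtain ⟨k, rfl⟩ : ∃ k, j = k + 1 := ⟨j - 1, by omega⟩
  simp only [Nat.add_sub_cancel]
  rw [hℓ, hℓ, hℓ]
  obtain ⟨hsk, hdk, hsumk⟩ := key k
  obtain ⟨hsk1, hdk1, hsumk1⟩ := key (k+1)
  have hdk1le : d (k+1) ≤ α ^ (k+1) := by linarith
  have hdkle : d k ≤ α ^ k := by linarith
  have hpk : (0 : ℝ) < α ^ k := pow_pos hαpos k
  have e1 : α ^ (k+1) = α ^ k * α := pow_succ α k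
  have e2 : α ^ (k+2) = α ^ k * α * α := by rw [pow_succ, e1]
  have e3 : α ^ (k+3) = α ^ k * α * α * α := by rw [pow_succ, e2]
  have hlow : α ^ (k + 1 + 1) < α ^ (k+2) + α ^ (k+1) + α ^ k + d (k+1) + s2 * d k := by
    have : 0 < s2 * d k := by nlinarith
    have hpk1 : (0 : ℝ) < α ^ (k+1) := pow_pos hαpos _
    nlinarith
  have hhigh : α ^ (k+2) + α ^ (k+1) + α ^ k + d (k+1) + s2 * d k < α ^ (k + 1 + 2) := by
    have h4 : α ^ (k + 1 + 2) = α ^ (k + 3) := by norm_num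
    rw [h4, e1, e2, e3]
    rw [e1] at hdk1le
    have hA : s2 * d k ≤ s2 * α ^ k := by nlinarith
    have hscalar : α * α * α - (α * α + 2 * α + 1 + s2) = 1 := by
      rw [hα]; linear_combination (s2 + 2) * hs2
    nlinarith [hscalar, hpk, hA, hdk1le]
  refine ⟨hlow, hhigh, ?_⟩
  intro z hz hunit
  have hfz : f2 z = α ^ (k+2) + α ^ (k+1) + α ^ k + d (k+1) + s2 * d k := by
    rw [f2_apply, hz]
  set v : Zsqrtd 2 := z * ((uw⁻¹ : (Zsqrtd 2)ˣ) : Zsqrtd 2) ^ (k + 2) with hv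
  have hvunit : IsUnit v := hunit.mul ((uw⁻¹ : (Zsqrtd 2)ˣ).isUnit.pow (k+2))
  have hfv : f2 v = f2 z * (α⁻¹) ^ (k+2) := by
    rw [hv, map_mul, map_pow, f2_uw_inv]
  have hαinv : α⁻¹ * α = 1 := inv_mul_cancel₀ (ne_of_gt hαpos)
  have hppos : (0 : ℝ) < α ^ (k+2) := pow_pos hαpos _
  have hinvpow : (α⁻¹) ^ (k+2) * α ^ (k+2) = 1 := by
    rw [← mul_pow, hαinv, one_pow]
  have h1v : 1 < f2 (v : Zsqrtd 2) := by
    rw [hfv, hfz]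
    have : α ^ (k + 1 + 1) = α ^ (k + 2) := by norm_num
    rw [this] at hlow
    nlinarith
  have h2v : f2 (v : Zsqrtd 2) < α := by
    rw [hfv, hfz]
    have h4 : α ^ (k + 1 + 2) = α ^ (k + 2) * α := by rw [← pow_succ]
    rw [h4] at hhigh
    nlinarith
  exact keyB v hvunit h1v h2v
end
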